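/- Assume the general counting-measure setup. Let Ω ⊂ [0,1] be a finite union of closed intervals with len*(Ω) > 0, let H ≥ 1 be an integer and let δ ∈ (0,1) be such that len*(Ω) < ν_ρ(δ). Then μ_H(Ω) ≤ 4·∫_Ω ρ + (8δ/(1−δ) + E(H)/(len*(Ω)·min_{[0,1]} ρ))·(|Ω|·η_ρ(len*(Ω)) + ∫_Ω ρ) + 4·|Ω|·η_ρ(len*(Ω)), where len*(Ω) is the minimal length of the connected components of Ω and |·| denotes Lebesgue measure. -/

import Mathlib

/-! Every connected component of `Ω` is an interval of length at least `lenStar Ω`, so `Ω` has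
at most `|Ω| / lenStar Ω` components. The discrepancy bound on each component gives
`μ_H(Ω) ≤ ∫_Ω ρ + #components · E(H)`, and `|Ω| · min ρ ≤ ∫_Ω ρ` turns this into
`μ_H(Ω) ≤ (1 + E(H) / (lenStar Ω · min ρ)) · ∫_Ω ρ`; the remaining terms of the bound are
nonnegative. -/

open MeasureTheory Set

noncomputable section

def muH (X : ℕ → Finset ℝ) (H : ℕ) (A : Set ℝ) : ℝ :=
  (∑ α ∈ X H, Set.indicator A (fun _ => (1 : ℝ)) (Int.fract α)) / ((X H).card : ℝ)

def lenStar (S : Set ℝ) : ℝ :=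
  sInf ((fun x => (volume (connectedComponentIn S x)).toReal) '' S)

def etaMod (f : ℝ → ℝ) (ε : ℝ) : ℝ :=
  sInf {η : ℝ | 0 < η ∧ ∀ x ∈ Set.Icc (0 : ℝ) 1, ∀ y ∈ Set.Icc (0 : ℝ) 1,
    |x - y| ≤ ε → |f x - f y| ≤ η}

def nuMod (f : ℝ → ℝ) (δ : ℝ) : ℝ :=
  sSup {ε : ℝ | 0 < ε ∧ etaMod f ε ≤ δ * sInf (f '' Set.Icc 0 1)}

section Components

variable {α : Type*} [TopologicalSpace α] {Ω : Set α}

theorem pairwiseDisjoint_connectedComponentIn_image :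
    (connectedComponentIn Ω '' Ω).PairwiseDisjoint id := by
  rintro _ ⟨x, -, rfl⟩ _ ⟨y, -, rfl⟩ hne
  refine Set.disjoint_left.2 fun z hzx hzy => hne ?_
  rw [connectedComponentIn_eq hzx, connectedComponentIn_eq hzy]

theorem biUnion_connectedComponentIn_image : ⋃ s ∈ connectedComponentIn Ω '' Ω, s = Ω := by
  rw [biUnion_image]
  exact subset_antisymm (iUnion₂_subset fun x _ => connectedComponentIn_subset Ω x)
    fun x hx => mem_biUnion hx (mem_connectedComponentIn hx)

theorem finite_connectedComponentIn_image {ι : Type*} [Finite ι] {S : ι → Set α}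
    (hS : ∀ i, IsPreconnected (S i)) (hΩ : Ω = ⋃ i, S i) :
    (connectedComponentIn Ω '' Ω).Finite := by
  have hsingle : ∀ i, (connectedComponentIn Ω '' S i).Subsingleton := by
    rintro i _ ⟨x, hx, rfl⟩ _ ⟨y, hy, rfl⟩
    have hSΩ : S i ⊆ Ω := hΩ ▸ subset_iUnion S i
    exact connectedComponentIn_eq ((hS i).subset_connectedComponentIn hx hSΩ hy)
  refine (finite_iUnion fun i => (hsingle i).finite).subset ?_
  rintro _ ⟨x, hx, rfl⟩
  rw [hΩ, mem_iUnion] at hx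
  obtain ⟨i, hi⟩ := hx
  exact mem_iUnion.2 ⟨i, x, hi, rfl⟩

end Components

theorem IsCompact.sInf_image_pos {α : Type*} [TopologicalSpace α] {K : Set α} {f : α → ℝ}
    (hK : IsCompact K) (hne : K.Nonempty) (hf : ContinuousOn f K) (hpos : ∀ x ∈ K, 0 < f x) :
    0 < sInf (f '' K) := by
  obtain ⟨x, hx, hfx⟩ := (hK.image_of_continuousOn hf).sInf_mem (hne.image f)
  exact hfx ▸ hpos x hx

theorem lenStar_le_measureReal_connectedComponentIn {S : Set ℝ} {x : ℝ} (hx : x ∈ S) :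
    lenStar S ≤ volume.real (connectedComponentIn S x) :=
  csInf_le ⟨0, by rintro _ ⟨y, -, rfl⟩; exact ENNReal.toReal_nonneg⟩ ⟨x, hx, rfl⟩

theorem card_mul_le_measureReal_biUnion {β ι : Type*} [MeasurableSpace β] {μ : Measure β}
    {s : Finset ι} {t : ι → Set β} {ℓ : ℝ} (hd : (s : Set ι).PairwiseDisjoint t)
    (hm : ∀ i ∈ s, MeasurableSet (t i)) (hfin : μ (⋃ i ∈ s, t i) ≠ ⊤)
    (hℓ : ∀ i ∈ s, ℓ ≤ μ.real (t i)) :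
    s.card * ℓ ≤ μ.real (⋃ i ∈ s, t i) := by
  have hfin_i : ∀ i ∈ s, μ (t i) ≠ ⊤ := fun i hi =>
    ne_top_of_le_ne_top hfin (measure_mono (subset_biUnion_of_mem hi))
  rw [measureReal_biUnion_finset hd hm hfin_i]
  simpa using Finset.card_nsmul_le_sum s _ ℓ hℓ

theorem muH_biUnion_finset (X : ℕ → Finset ℝ) (H : ℕ) {ι : Type*} (s : Finset ι)
    {t : ι → Set ℝ} (hd : (s : Set ι).PairwiseDisjoint t) :
    muH X H (⋃ i ∈ s, t i) = ∑ i ∈ s, muH X H (t i) := by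
  simp only [muH, ← Finset.sum_div, Finset.indicator_biUnion_apply s t hd]
  rw [Finset.sum_comm]

theorem muH_biUnion_le {X : ℕ → Finset ℝ} {H : ℕ} {ρ : ℝ → ℝ} {e : ℝ} {ι : Type*}
    {s : Finset ι} {t : ι → Set ℝ} (hd : (s : Set ι).PairwiseDisjoint t)
    (hm : ∀ i ∈ s, MeasurableSet (t i)) (hρ : ∀ i ∈ s, IntegrableOn ρ (t i))
    (hmu : ∀ i ∈ s, muH X H (t i) ≤ (∫ x in t i, ρ x) + e) :
    muH X H (⋃ i ∈ s, t i) ≤ (∫ x in ⋃ i ∈ s, t i, ρ x) + s.card * e := by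
  rw [muH_biUnion_finset X H s hd, integral_biUnion_finset s hm hd hρ]
  calc ∑ i ∈ s, muH X H (t i) ≤ ∑ i ∈ s, ((∫ x in t i, ρ x) + e) := Finset.sum_le_sum hmu
    _ = (∑ i ∈ s, ∫ x in t i, ρ x) + s.card * e := by
      rw [Finset.sum_add_distrib, Finset.sum_const, nsmul_eq_mul]

theorem exists_finset_components_of_eq_iUnion_Icc {Ω : Set ℝ} {m : ℕ} {a b : Fin m → ℝ}
    (hΩ : Ω = ⋃ i, Icc (a i) (b i)) :
    ∃ T : Finset (Set ℝ), (T : Set (Set ℝ)).PairwiseDisjoint id ∧ ⋃ s ∈ T, id s = Ω ∧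
      ∀ s ∈ T, s.OrdConnected ∧ s ⊆ Ω ∧ lenStar Ω ≤ volume.real s := by
  have hfin := finite_connectedComponentIn_image (fun i => isPreconnected_Icc) hΩ
  refine ⟨hfin.toFinset, ?_, ?_, fun s hs => ?_⟩
  · simpa using pairwiseDisjoint_connectedComponentIn_image (Ω := Ω)
  · simpa using biUnion_connectedComponentIn_image (Ω := Ω)
  · obtain ⟨x, hx, rfl⟩ := hfin.mem_toFinset.1 hs
    exact ⟨isPreconnected_connectedComponentIn.ordConnected, connectedComponentIn_subset Ω x,
      lenStar_le_measureReal_connectedComponentIn hx⟩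

theorem muH_le_one_add_div_mul_integral {X : ℕ → Finset ℝ} {H : ℕ} {ρ : ℝ → ℝ} {e : ℝ}
    (hρc : ContinuousOn ρ (Icc 0 1)) (hρpos : ∀ x ∈ Icc (0 : ℝ) 1, 0 < ρ x)
    (hE : ∀ I : Set ℝ, I ⊆ Icc 0 1 → I.OrdConnected → muH X H I ≤ (∫ x in I, ρ x) + e)
    {Ω : Set ℝ} {m : ℕ} {a b : Fin m → ℝ} (hΩ : Ω = ⋃ i, Icc (a i) (b i))
    (hΩs : Ω ⊆ Icc 0 1) (hlen : 0 < lenStar Ω) :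
    muH X H Ω ≤ (1 + e / (lenStar Ω * sInf (ρ '' Icc 0 1))) * ∫ x in Ω, ρ x := by
  obtain ⟨T, hdisj, hcover, hT⟩ := exists_finset_components_of_eq_iUnion_Icc hΩ
  have hmeas : ∀ s ∈ T, MeasurableSet s := fun s hs => (hT s hs).1.measurableSet
  have hsub : ∀ s ∈ T, s ⊆ Icc 0 1 := fun s hs => (hT s hs).2.1.trans hΩs
  have hint : IntegrableOn ρ (Icc 0 1) := hρc.integrableOn_Icc
  have hΩfin : volume Ω ≠ ⊤ :=
    ne_top_of_le_ne_top (by simp) (measure_mono hΩs)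
  have he : 0 ≤ e := by simpa [muH] using hE ∅ (empty_subset _) ordConnected_empty
  set r := sInf (ρ '' Icc 0 1)
  have hr : 0 < r := isCompact_Icc.sInf_image_pos (nonempty_Icc.2 zero_le_one) hρc hρpos
  have hcount : muH X H Ω ≤ (∫ x in Ω, ρ x) + T.card * e := by
    have := muH_biUnion_le hdisj hmeas (fun s hs => hint.mono_set (hsub s hs))
      fun s hs => hE s (hsub s hs) (hT s hs).1
    rwa [hcover] at this
  have hcard : T.card * lenStar Ω ≤ volume.real Ω := by
    have := card_mul_le_measureReal_biUnion hdisj hmeas (by rwa [hcover])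
      fun s hs => (hT s hs).2.2
    rwa [hcover] at this
  have hmass : r * volume.real Ω ≤ ∫ x in Ω, ρ x :=
    setIntegral_ge_of_const_le_real (hcover ▸ T.measurableSet_biUnion hmeas) hΩfin
      (fun x hx => csInf_le (isCompact_Icc.bddBelow_image hρc) (mem_image_of_mem ρ (hΩs hx)))
      (hint.mono_set hΩs)
  have hcardE : T.card * e ≤ e / (lenStar Ω * r) * ∫ x in Ω, ρ x := by
    rw [div_mul_eq_mul_div, le_div_iff₀ (mul_pos hlen hr)]
    calc T.card * e * (lenStar Ω * r) = e * (T.card * lenStar Ω * r) := by ring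
      _ ≤ e * (volume.real Ω * r) := by gcongr
      _ ≤ e * ∫ x in Ω, ρ x := by rw [mul_comm _ r]; gcongr
  linarith

theorem stmt14_general
    (X : ℕ → Finset ℝ)
    (ρ : ℝ → ℝ) (hρc : ContinuousOn ρ (Set.Icc 0 1))
    (hρpos : ∀ x ∈ Set.Icc (0 : ℝ) 1, 0 < ρ x)
    (E : ℕ → ℝ)
    (hE : ∀ H : ℕ, 1 ≤ H → ∀ I : Set ℝ, I ⊆ Set.Icc 0 1 → I.OrdConnected →
      |muH X H I - ∫ x in I, ρ x| ≤ E H)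
    (Ω : Set ℝ)
    (hΩ : ∃ (m : ℕ) (a b : Fin m → ℝ), (∀ i, a i ≤ b i) ∧ Ω = ⋃ i, Set.Icc (a i) (b i))
    (hΩs : Ω ⊆ Set.Icc 0 1) (hlen : 0 < lenStar Ω)
    (H : ℕ) (hH : 1 ≤ H) (δ : ℝ) (hδ : δ ∈ Set.Ioo (0 : ℝ) 1) :
    muH X H Ω ≤
      4 * (∫ x in Ω, ρ x) +
      (8 * δ / (1 - δ) + E H / (lenStar Ω * sInf (ρ '' Set.Icc 0 1))) *
        ((volume Ω).toReal * etaMod ρ (lenStar Ω) + ∫ x in Ω, ρ x) +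
      4 * (volume Ω).toReal * etaMod ρ (lenStar Ω) := by
  obtain ⟨m, a, b, -, hΩeq⟩ := hΩ
  have hmain := muH_le_one_add_div_mul_integral hρc hρpos
    (fun I hI hIo => le_add_of_sub_left_le (abs_le.1 (hE H hH I hI hIo)).2) hΩeq hΩs hlen
  have hEH : 0 ≤ E H := (abs_nonneg _).trans (hE H hH ∅ (empty_subset _) ordConnected_empty)
  have hΩmeas : MeasurableSet Ω := hΩeq ▸ MeasurableSet.iUnion fun i => measurableSet_Icc
  have hmass : 0 ≤ ∫ x in Ω, ρ x := setIntegral_nonneg hΩmeas fun x hx => (hρpos x (hΩs hx)).le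
  have hV : 0 ≤ (volume Ω).toReal := ENNReal.toReal_nonneg
  have hη : 0 ≤ etaMod ρ (lenStar Ω) := Real.sInf_nonneg fun _ hη => hη.1.le
  have hq : 0 ≤ 8 * δ / (1 - δ) := div_nonneg (by linarith [hδ.1]) (by linarith [hδ.2])
  have he : 0 ≤ E H / (lenStar Ω * sInf (ρ '' Set.Icc 0 1)) :=
    div_nonneg hEH (mul_nonneg hlen.le (Real.sInf_nonneg (by
      rintro _ ⟨x, hx, rfl⟩; exact (hρpos x hx).le)))
  linarith [mul_nonneg hq (add_nonneg (mul_nonneg hV hη) hmass), mul_nonneg he (mul_nonneg hV hη),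
    mul_nonneg hV hη]

theorem stmt14
    (X : ℕ → Finset ℝ) (hX : ∀ H : ℕ, 1 ≤ H → (X H).Nonempty)
    (ρ : ℝ → ℝ) (hρc : ContinuousOn ρ (Set.Icc 0 1))
    (hρpos : ∀ x ∈ Set.Icc (0 : ℝ) 1, 0 < ρ x)
    (hρ1 : (∫ x in (0 : ℝ)..1, ρ x) = 1)
    (E : ℕ → ℝ) (hE0 : ∀ H, 0 ≤ E H)
    (hE : ∀ H : ℕ, 1 ≤ H → ∀ I : Set ℝ, I ⊆ Set.Icc 0 1 → I.OrdConnected →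
      |muH X H I - ∫ x in I, ρ x| ≤ E H)
    (Ω : Set ℝ)
    (hΩ : ∃ (m : ℕ) (a b : Fin m → ℝ), (∀ i, a i ≤ b i) ∧ Ω = ⋃ i, Set.Icc (a i) (b i))
    (hΩs : Ω ⊆ Set.Icc 0 1) (hlen : 0 < lenStar Ω)
    (H : ℕ) (hH : 1 ≤ H) (δ : ℝ) (hδ : δ ∈ Set.Ioo (0 : ℝ) 1)
    (hlt : lenStar Ω < nuMod ρ δ) :
    muH X H Ω ≤
      4 * (∫ x in Ω, ρ x) +
      (8 * δ / (1 - δ) + E H / (lenStar Ω * sInf (ρ '' Set.Icc 0 1))) *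
        ((volume Ω).toReal * etaMod ρ (lenStar Ω) + ∫ x in Ω, ρ x) +
      4 * (volume Ω).toReal * etaMod ρ (lenStar Ω) :=
  stmt14_general X ρ hρc hρpos E hE Ω hΩ hΩs hlen H hH δ hδ
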